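/- (Discrete nabla fractional Opial inequality.) Let μ > 2 be non-integer with m = ⌈μ⌉ ≥ 3, let p ∈ ℤ₊ with μ > p, and let a ∈ ℤ₊. Let f be a real valued function defined on {a−m+1, a−m+2, ...}, let t ∈ ℕ with t ≥ a + m, and assume ∇^k f(a) = 0 for k = p, ..., m−1. Let γ, δ > 1 with 1/γ + 1/δ = 1, let C(τ) > 0 for τ = a+1, ..., t, and D(t') ≥ 0 for t' = a+m, ..., t. Define θ(t', a, μ, p, C, γ) := ( Σ_{τ=a+1}^{t'} [ (t'−τ+1)^{↑(μ−p−1)} · C(τ)^{−1} ]^γ )^{1/γ} for t' ≥ a+m; g(t') := Σ_{τ=a+1}^{t'} C(τ)^δ |∇_{(a+1)*}^{μ} f(τ)|^δ for t' ≥ a+1; G(t, a, m, g) := 2( g(t)² − g(a+m−1)² ) + ( g(t−1)² − g(a+m−2)² )/2 + 2[ g(t)·g(t−1) − g(a+m−1)·g(a+m−2) ]; and K(t) := (1/Γ(μ−p)) · ( Σ_{t'=a+m}^{t} [ D(t') · C(t')^{−1} · θ(t', a, μ, p, C, γ) ]^γ )^{1/γ}. Then Σ_{t'=a+m}^{t}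 D(t') · |∇^p f(t')| · |∇_{(a+1)*}^{μ} f(t')| ≤ K(t) · ( G(t, a, m, g) )^{1/δ}. -/

import Mathlib

/-!
The kernels `(n + 1)^{↑(ν-1)} / Γ(ν)` of the nabla fractional sums are the multichoose
coefficients `ν(ν+1)⋯(ν+n-1)/n!` of `(1 - x)^{-ν}`, so Chu–Vandermonde gives the semigroup law
`∇^{-ν} ∇^{-σ} = ∇^{-(ν+σ)}`. Since `∇_{a+1}^{-k} ∇^k h = h` when `∇^i h(a) = 0` for `i < k`, the
initial conditions give the representation `∇^p f = ∇_{a+1}^{-(μ-p)} ∇_{(a+1)*}^{μ} f`.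
Hölder's inequality on this representation bounds `|∇^p f(t')|` by `θ(t') g(t')^{1/δ} / Γ(μ-p)`,
a second Hölder inequality over `t'` leaves `Σ g(t') (g(t') - g(t'-1))`, and since `g` is
nondecreasing and nonnegative this sum telescopes below `g(t)² - g(a+m-1)² ≤ G`.
-/

open Finset

/-- Backward (nabla) difference: `∇f(t) = f(t) - f(t-1)`. -/
def nabla (f : ℤ → ℝ) : ℤ → ℝ := fun t => f t - f (t - 1)

/-- Rising factorial `t^{↑α} = Γ(t+α)/Γ(t)`. -/
noncomputable def risingFac (t α : ℝ) : ℝ := Real.Gamma (t + α) / Real.Gamma t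

/-- The `ν`-th order nabla fractional sum `∇_a^{-ν} f (t) = Σ_{s=a}^{t} (t-s+1)^{↑(ν-1)}/Γ(ν) · f(s)`. -/
noncomputable def fracSum (ν : ℝ) (a : ℤ) (f : ℤ → ℝ) : ℤ → ℝ := fun t =>
  ∑ s ∈ Finset.Icc a t, risingFac ((t - s + 1 : ℤ) : ℝ) (ν - 1) / Real.Gamma ν * f s

/-- Caputo-like nabla fractional difference `∇_{a*}^{μ} f = ∇_a^{-(m-μ)} (∇^m f)`, `m = ⌈μ⌉`. -/
noncomputable def caputoNabla (μ : ℝ) (a : ℤ) (f : ℤ → ℝ) : ℤ → ℝ :=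
  fracSum ((⌈μ⌉₊ : ℝ) - μ) a (nabla^[⌈μ⌉₊] f)

theorem Ring.multichoose_add {R : Type*} [Ring R] [BinomialRing R] {r s : R} (h : Commute r s)
    (n : ℕ) :
    multichoose (r + s) n = ∑ ij ∈ antidiagonal n, multichoose r ij.1 * multichoose s ij.2 := by
  have := add_choose_eq (r := -r) (s := -s) n h.neg_left.neg_right
  rw [← neg_add, choose_neg'] at this
  simp only [choose_neg', smul_mul_smul_comm, ← Int.negOnePow_add] at this
  rw [sum_congr rfl fun ij hij => by rw [← Nat.cast_add, mem_antidiagonal.mp hij],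
    ← smul_sum] at this
  exact smul_left_cancel _ this

theorem Ring.multichoose_eq_ascPochhammer_eval_div (r : ℝ) (n : ℕ) :
    multichoose r n = (ascPochhammer ℝ n).eval r / n.factorial := by
  rw [eq_div_iff (by positivity), ← Polynomial.ascPochhammer_smeval_eq_eval,
    ← factorial_nsmul_multichoose_eq_ascPochhammer, nsmul_eq_mul, mul_comm]

theorem Real.Gamma_add_nat_eq_ascPochhammer_eval_mul {x : ℝ} (hx : 0 < x) (n : ℕ) :
    Real.Gamma (x + n) = (ascPochhammer ℝ n).eval x * Real.Gamma x := by
  induction n with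
  | zero => simp
  | succ n ih =>
    rw [Nat.cast_succ, ← add_assoc, Real.Gamma_add_one (by positivity), ih,
      ascPochhammer_succ_eval]
    ring

theorem risingFac_sub_add_one_pos {ν : ℝ} (hν : 0 < ν) {s t : ℤ} (hst : s ≤ t) :
    0 < risingFac ((t - s + 1 : ℤ) : ℝ) (ν - 1) := by
  have : (1 : ℝ) ≤ ((t - s + 1 : ℤ) : ℝ) := by exact_mod_cast (by omega : (1 : ℤ) ≤ t - s + 1)
  exact div_pos (Real.Gamma_pos_of_pos (by linarith)) (Real.Gamma_pos_of_pos (by linarith))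

theorem risingFac_div_Gamma_eq_multichoose {ν : ℝ} (hν : 0 < ν) (n : ℕ) :
    risingFac (n + 1) (ν - 1) / Real.Gamma ν = Ring.multichoose ν n := by
  have hΓ : Real.Gamma ν ≠ 0 := (Real.Gamma_pos_of_pos hν).ne'
  rw [risingFac, show (n : ℝ) + 1 + (ν - 1) = ν + n by ring, Real.Gamma_nat_eq_factorial,
    Real.Gamma_add_nat_eq_ascPochhammer_eval_mul hν, Ring.multichoose_eq_ascPochhammer_eval_div]
  field_simp

theorem sum_Icc_sub_eq_sub {M : Type*} [AddCommGroup M] (h : ℤ → M) {b t : ℤ} (hbt : b ≤ t) :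
    ∑ s ∈ Icc (b + 1) t, (h s - h (s - 1)) = h t - h b := by
  induction t, hbt using Int.leInduction with
  | base => simp
  | succ t hbt ih =>
    rw [← insert_Icc_right_eq_Icc_add_one (by omega), sum_insert (by simp), ih,
      add_sub_cancel_right, sub_add_sub_cancel]

theorem sum_Icc_sub_sum_Icc_sub_one {M : Type*} [AddCommGroup M] (y : ℤ → M) {b s : ℤ}
    (hbs : b ≤ s) : ∑ τ ∈ Icc b s, y τ - ∑ τ ∈ Icc b (s - 1), y τ = y s := by
  conv_lhs => rw [← sub_add_cancel s 1]
  rw [← insert_Icc_right_eq_Icc_add_one (by omega), sum_insert (by simp), sub_add_cancel,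
    add_sub_cancel_right]

theorem sum_Icc_eq_sum_antidiagonal {M : Type*} [AddCommMonoid M] (τ : ℤ) (n : ℕ)
    (F : ℕ → ℕ → M) :
    ∑ s ∈ Icc τ (τ + n), F (τ + n - s).toNat (s - τ).toNat =
      ∑ ij ∈ antidiagonal n, F ij.1 ij.2 := by
  refine sum_nbij' (fun s => ((τ + n - s).toNat, (s - τ).toNat)) (fun ij => τ + ij.2)
    ?_ ?_ ?_ ?_ fun _ _ => rfl
  all_goals intro x hx; simp only [mem_Icc, HasAntidiagonal.mem_antidiagonal] at hx ⊢
  · omega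
  · omega
  · omega
  · ext <;> omega

theorem fracSum_eq_sum_multichoose {ν : ℝ} (hν : 0 < ν) (b : ℤ) (g : ℤ → ℝ) (t : ℤ) :
    fracSum ν b g t = ∑ s ∈ Icc b t, Ring.multichoose ν (t - s).toNat * g s := by
  refine sum_congr rfl fun s hs => ?_
  have hcast : ((t - s + 1 : ℤ) : ℝ) = ((t - s).toNat : ℕ) + 1 := by
    rw [mem_Icc] at hs
    exact_mod_cast (by omega : t - s + 1 = ((t - s).toNat : ℤ) + 1)
  rw [hcast, risingFac_div_Gamma_eq_multichoose hν]

theorem fracSum_fracSum {ν σ : ℝ} (hν : 0 < ν) (hσ : 0 < σ) (b : ℤ) (g : ℤ → ℝ) (t : ℤ) :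
    fracSum ν b (fracSum σ b g) t = fracSum (ν + σ) b g t := by
  simp only [fracSum_eq_sum_multichoose hν, fracSum_eq_sum_multichoose hσ,
    fracSum_eq_sum_multichoose (add_pos hν hσ), mul_sum]
  rw [sum_comm' (t' := Icc b t) (s' := fun τ => Icc τ t) fun s τ => by simp only [mem_Icc]; omega]
  refine sum_congr rfl fun τ hτ => ?_
  obtain ⟨n, rfl⟩ : ∃ n : ℕ, t = τ + n := ⟨(t - τ).toNat, by rw [mem_Icc] at hτ; omega⟩
  simp only [← mul_assoc, ← sum_mul]
  rw [sum_Icc_eq_sum_antidiagonal τ n fun i j => Ring.multichoose ν i * Ring.multichoose σ j,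
    ← Ring.multichoose_add (Commute.all _ _), add_sub_cancel_left, Int.toNat_natCast]

theorem fracSum_one (b : ℤ) (g : ℤ → ℝ) (t : ℤ) : fracSum 1 b g t = ∑ s ∈ Icc b t, g s := by
  simp only [fracSum_eq_sum_multichoose one_pos, Ring.multichoose_one, one_mul]

theorem fracSum_one_nabla (b : ℤ) (h : ℤ → ℝ) {t : ℤ} (hbt : b ≤ t) :
    fracSum 1 (b + 1) (nabla h) t = h t - h b := by
  rw [fracSum_one]
  exact sum_Icc_sub_eq_sub h hbt

theorem fracSum_eq_inv_Gamma_mul_sum (ν : ℝ) (b : ℤ) (g : ℤ → ℝ) (t : ℤ) :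
    fracSum ν b g t =
      (Real.Gamma ν)⁻¹ * ∑ s ∈ Icc b t, risingFac ((t - s + 1 : ℤ) : ℝ) (ν - 1) * g s := by
  rw [fracSum, mul_sum]
  exact sum_congr rfl fun s _ => by ring

theorem fracSum_congr (ν : ℝ) (b : ℤ) {g g' : ℤ → ℝ} {t : ℤ} (h : ∀ s ∈ Icc b t, g s = g' s) :
    fracSum ν b g t = fracSum ν b g' t :=
  sum_congr rfl fun s hs => by rw [h s hs]

theorem fracSum_nabla_iterate (k : ℕ) {b t : ℤ} (hbt : b ≤ t) (h : ℤ → ℝ)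
    (hb : ∀ i ≤ k, nabla^[i] h b = 0) :
    fracSum (k + 1 : ℕ) (b + 1) (nabla^[k + 1] h) t = h t := by
  induction k generalizing h t with
  | zero =>
    rw [Nat.cast_one, Function.iterate_one, fracSum_one_nabla b h hbt]
    exact sub_eq_self.mpr (hb 0 le_rfl)
  | succ k ih =>
    rw [show ((k + 1 + 1 : ℕ) : ℝ) = 1 + (k + 1 : ℕ) by push_cast; ring,
      ← fracSum_fracSum one_pos (by positivity), Function.iterate_succ_apply,
      fracSum_congr 1 (b + 1) (g' := nabla h) fun s hs => ih (by rw [mem_Icc] at hs; omega) _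
        fun i hi => by rw [← Function.iterate_succ_apply]; exact hb _ (by omega),
      fracSum_one_nabla b h hbt]
    exact sub_eq_self.mpr (hb 0 (Nat.zero_le _))

theorem fracSum_caputoNabla {μ : ℝ} {p : ℕ} (hpμ : (p : ℝ) < μ) (hμ : μ < ⌈μ⌉₊) (f : ℤ → ℝ)
    {b t : ℤ} (hbt : b ≤ t) (hf : ∀ k, p ≤ k → k < ⌈μ⌉₊ → nabla^[k] f b = 0) :
    fracSum (μ - p) (b + 1) (caputoNabla μ (b + 1) f) t = nabla^[p] f t := by
  obtain ⟨k, hk⟩ : ∃ k : ℕ, ⌈μ⌉₊ = k + 1 + p :=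
    ⟨⌈μ⌉₊ - p - 1, by have : (p : ℝ) < ⌈μ⌉₊ := hpμ.trans hμ; norm_cast at this; omega⟩
  rw [caputoNabla, fracSum_fracSum (by linarith) (by linarith), hk, Function.iterate_add_apply,
    show μ - p + ((k + 1 + p : ℕ) - μ) = (k + 1 : ℕ) by push_cast; ring]
  exact fracSum_nabla_iterate k hbt _ fun i hi => by
    rw [← Function.iterate_add_apply]; exact hf _ (by omega) (by omega)

theorem sum_rpow_rpow_one_div_nonneg {ι : Type*} (s : Finset ι) {f : ι → ℝ} (p : ℝ)
    (hf : ∀ i ∈ s, 0 ≤ f i) : 0 ≤ (∑ i ∈ s, f i ^ p) ^ (1 / p) :=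
  Real.rpow_nonneg (sum_nonneg fun i hi => Real.rpow_nonneg (hf i hi) p) _

theorem sum_mul_le_weighted_Lp_mul_Lq {ι : Type*} (s : Finset ι) {γ δ : ℝ}
    (hγδ : γ.HolderConjugate δ) {w x C : ι → ℝ} (hw : ∀ i ∈ s, 0 ≤ w i)
    (hx : ∀ i ∈ s, 0 ≤ x i) (hC : ∀ i ∈ s, 0 < C i) :
    ∑ i ∈ s, w i * x i ≤
      (∑ i ∈ s, (w i * (C i)⁻¹) ^ γ) ^ (1 / γ) * (∑ i ∈ s, C i ^ δ * x i ^ δ) ^ (1 / δ) := by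
  have hsplit : ∀ i ∈ s, w i * x i = w i * (C i)⁻¹ * (C i * x i) := fun i hi => by
    field_simp [(hC i hi).ne']
  have hpow : ∀ i ∈ s, C i ^ δ * x i ^ δ = (C i * x i) ^ δ := fun i hi =>
    (Real.mul_rpow (hC i hi).le (hx i hi)).symm
  rw [sum_congr rfl hsplit, sum_congr rfl hpow]
  exact Real.inner_le_Lp_mul_Lq_of_nonneg s hγδ
    (fun i hi => mul_nonneg (hw i hi) (inv_nonneg.2 (hC i hi).le))
    (fun i hi => mul_nonneg (hC i hi).le (hx i hi))

theorem sum_mul_abs_mul_abs_le {ι : Type*} (s : Finset ι) {γ δ c : ℝ}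
    (hγδ : γ.HolderConjugate δ) (hc : 0 ≤ c) {u x g θ C D : ι → ℝ}
    (hu : ∀ i ∈ s, |u i| ≤ c * (θ i * g i ^ (1 / δ))) (hg : ∀ i ∈ s, 0 ≤ g i)
    (hθ : ∀ i ∈ s, 0 ≤ θ i) (hC : ∀ i ∈ s, 0 < C i) (hD : ∀ i ∈ s, 0 ≤ D i) :
    ∑ i ∈ s, D i * |u i| * |x i| ≤ c * (∑ i ∈ s, (D i * (C i)⁻¹ * θ i) ^ γ) ^ (1 / γ) *
      (∑ i ∈ s, g i * (C i ^ δ * |x i| ^ δ)) ^ (1 / δ) := by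
  calc ∑ i ∈ s, D i * |u i| * |x i|
      ≤ ∑ i ∈ s, c * ((D i * θ i) * (g i ^ (1 / δ) * |x i|)) := by
        refine sum_le_sum fun i hi => ?_
        calc D i * |u i| * |x i| ≤ D i * (c * (θ i * g i ^ (1 / δ))) * |x i| := by
              gcongr
              · exact hD i hi
              · exact hu i hi
          _ = _ := by ring
    _ ≤ c * ((∑ i ∈ s, (D i * θ i * (C i)⁻¹) ^ γ) ^ (1 / γ) *
          (∑ i ∈ s, C i ^ δ * (g i ^ (1 / δ) * |x i|) ^ δ) ^ (1 / δ)) := by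
        rw [← mul_sum]
        gcongr
        exact sum_mul_le_weighted_Lp_mul_Lq s hγδ (fun i hi => mul_nonneg (hD i hi) (hθ i hi))
          (fun i hi => mul_nonneg (Real.rpow_nonneg (hg i hi) _) (abs_nonneg _)) hC
    _ = _ := by
        rw [mul_assoc]
        congr 3 <;> refine sum_congr rfl fun i hi => ?_
        · rw [mul_right_comm]
        · rw [Real.mul_rpow (Real.rpow_nonneg (hg i hi) _) (abs_nonneg _), one_div,
            Real.rpow_inv_rpow (hg i hi) hγδ.symm.pos.ne']
          ring

theorem sum_Icc_nonneg_of_le {y : ℤ → ℝ} {b r t : ℤ} (hy : ∀ τ ∈ Icc b t, 0 ≤ y τ)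
    (hrt : r ≤ t) : 0 ≤ ∑ τ ∈ Icc b r, y τ :=
  sum_nonneg fun τ hτ => hy τ (Icc_subset_Icc_right hrt hτ)

theorem sum_Icc_le_sum_Icc_of_le {y : ℤ → ℝ} {b r s t : ℤ} (hy : ∀ τ ∈ Icc b t, 0 ≤ y τ)
    (hrs : r ≤ s) (hst : s ≤ t) : ∑ τ ∈ Icc b r, y τ ≤ ∑ τ ∈ Icc b s, y τ :=
  sum_le_sum_of_subset_of_nonneg (Icc_subset_Icc_right hrs) fun τ hτ _ =>
    hy τ (Icc_subset_Icc_right hst hτ)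

theorem sum_Icc_partialSum_mul_le {y : ℤ → ℝ} {b s₀ t : ℤ} (hy : ∀ τ ∈ Icc b t, 0 ≤ y τ)
    (hbs₀ : b ≤ s₀) (hs₀t : s₀ - 1 ≤ t) :
    ∑ s ∈ Icc s₀ t, (∑ τ ∈ Icc b s, y τ) * y s ≤
      (∑ τ ∈ Icc b t, y τ) ^ 2 - (∑ τ ∈ Icc b (s₀ - 1), y τ) ^ 2 := by
  set P : ℤ → ℝ := fun s => ∑ τ ∈ Icc b s, y τ
  calc ∑ s ∈ Icc s₀ t, P s * y s ≤ ∑ s ∈ Icc (s₀ - 1 + 1) t, (P s ^ 2 - P (s - 1) ^ 2) := by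
        rw [sub_add_cancel]
        refine sum_le_sum fun s hs => ?_
        rw [mem_Icc] at hs
        have hP : 0 ≤ P (s - 1) := sum_Icc_nonneg_of_le hy (by omega)
        have hys : 0 ≤ y s := hy s (mem_Icc.2 ⟨by omega, hs.2⟩)
        rw [← sum_Icc_sub_sum_Icc_sub_one y (by omega : b ≤ s)] at hys ⊢
        nlinarith [mul_nonneg hP hys]
    _ = P t ^ 2 - P (s₀ - 1) ^ 2 := sum_Icc_sub_eq_sub (fun s => P s ^ 2) hs₀t

theorem opial_constant_nonneg {γ : ℝ} {k : ℤ → ℤ → ℝ} {C D : ℤ → ℝ} {b s₀ t : ℤ}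
    (hbs₀ : b ≤ s₀) (hk : ∀ s ∈ Icc s₀ t, ∀ τ ∈ Icc b s, 0 ≤ k s τ)
    (hC : ∀ τ ∈ Icc b t, 0 < C τ) (hD : ∀ s ∈ Icc s₀ t, 0 ≤ D s) :
    0 ≤ (∑ s ∈ Icc s₀ t,
      (D s * (C s)⁻¹ * (∑ τ ∈ Icc b s, (k s τ * (C τ)⁻¹) ^ γ) ^ (1 / γ)) ^ γ) ^ (1 / γ) :=
  sum_rpow_rpow_one_div_nonneg _ γ fun s hs => mul_nonneg
    (mul_nonneg (hD s hs) (inv_nonneg.2 (hC s (Icc_subset_Icc_left hbs₀ hs)).le))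
    (sum_rpow_rpow_one_div_nonneg _ γ fun τ hτ => mul_nonneg (hk s hs τ hτ)
      (inv_nonneg.2 (hC τ (Icc_subset_Icc_right (mem_Icc.1 hs).2 hτ)).le))

theorem opial_sum_Icc_le {γ δ c : ℝ} (hγδ : γ.HolderConjugate δ) (hc : 0 ≤ c)
    {k : ℤ → ℤ → ℝ} {u x C D : ℤ → ℝ} {b s₀ t : ℤ} (hbs₀ : b ≤ s₀) (hs₀t : s₀ - 1 ≤ t)
    (hk : ∀ s ∈ Icc s₀ t, ∀ τ ∈ Icc b s, 0 ≤ k s τ) (hC : ∀ τ ∈ Icc b t, 0 < C τ)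
    (hD : ∀ s ∈ Icc s₀ t, 0 ≤ D s)
    (hu : ∀ s ∈ Icc s₀ t, u s = c * ∑ τ ∈ Icc b s, k s τ * x τ) :
    ∑ s ∈ Icc s₀ t, D s * |u s| * |x s| ≤
      c * (∑ s ∈ Icc s₀ t,
        (D s * (C s)⁻¹ * (∑ τ ∈ Icc b s, (k s τ * (C τ)⁻¹) ^ γ) ^ (1 / γ)) ^ γ) ^ (1 / γ) *
      ((∑ τ ∈ Icc b t, C τ ^ δ * |x τ| ^ δ) ^ 2 -
        (∑ τ ∈ Icc b (s₀ - 1), C τ ^ δ * |x τ| ^ δ) ^ 2) ^ (1 / δ) := by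
  have hy : ∀ τ ∈ Icc b t, 0 ≤ C τ ^ δ * |x τ| ^ δ := fun τ hτ =>
    mul_nonneg (Real.rpow_nonneg (hC τ hτ).le _) (Real.rpow_nonneg (abs_nonneg _) _)
  have hC' : ∀ s ∈ Icc s₀ t, ∀ τ ∈ Icc b s, 0 < C τ := fun s hs τ hτ =>
    hC τ (Icc_subset_Icc_right (mem_Icc.1 hs).2 hτ)
  have hθ : ∀ s ∈ Icc s₀ t, 0 ≤ (∑ τ ∈ Icc b s, (k s τ * (C τ)⁻¹) ^ γ) ^ (1 / γ) :=
    fun s hs => sum_rpow_rpow_one_div_nonneg _ γ fun τ hτ =>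
      mul_nonneg (hk s hs τ hτ) (inv_nonneg.2 (hC' s hs τ hτ).le)
  have hu' : ∀ s ∈ Icc s₀ t, |u s| ≤ c * ((∑ τ ∈ Icc b s, (k s τ * (C τ)⁻¹) ^ γ) ^ (1 / γ) *
      (∑ τ ∈ Icc b s, C τ ^ δ * |x τ| ^ δ) ^ (1 / δ)) := fun s hs => by
    rw [hu s hs, abs_mul, abs_of_nonneg hc]
    gcongr
    calc |∑ τ ∈ Icc b s, k s τ * x τ| ≤ ∑ τ ∈ Icc b s, k s τ * |x τ| :=
          (abs_sum_le_sum_abs _ _).trans_eq <| sum_congr rfl fun τ hτ => by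
            rw [abs_mul, abs_of_nonneg (hk s hs τ hτ)]
      _ ≤ _ := sum_mul_le_weighted_Lp_mul_Lq _ hγδ (hk s hs) (fun _ _ => abs_nonneg _) (hC' s hs)
  calc _ ≤ _ := sum_mul_abs_mul_abs_le _ hγδ hc hu'
          (fun s hs => sum_Icc_nonneg_of_le hy (mem_Icc.1 hs).2) hθ
          (fun s hs => hC s (Icc_subset_Icc_left hbs₀ hs)) hD
    _ ≤ _ := by
        refine mul_le_mul_of_nonneg_left (Real.rpow_le_rpow ?_
          (sum_Icc_partialSum_mul_le hy hbs₀ hs₀t) (one_div_nonneg.2 hγδ.symm.nonneg))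
          (mul_nonneg hc (opial_constant_nonneg hbs₀ hk hC hD))
        exact sum_nonneg fun s hs => mul_nonneg (sum_Icc_nonneg_of_le hy (mem_Icc.1 hs).2)
          (hy s (Icc_subset_Icc_left hbs₀ hs))

theorem discrete_nabla_fractional_opial_general
    (μ : ℝ) (hμint : ∀ n : ℤ, μ ≠ n)
    (m : ℕ) (hm : m = ⌈μ⌉₊)
    (p : ℕ) (hp : (p : ℝ) < μ) (a : ℕ)
    (f : ℤ → ℝ) (t : ℤ) (ht : (a : ℤ) + m ≤ t)
    (hf0 : ∀ k, p ≤ k → k ≤ m - 1 → nabla^[k] f a = 0)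
    (γ δ : ℝ) (hγ : 1 < γ) (hγδ : 1 / γ + 1 / δ = 1)
    (C D : ℤ → ℝ)
    (hC : ∀ τ ∈ Finset.Icc ((a : ℤ) + 1) t, 0 < C τ)
    (hD : ∀ t' ∈ Finset.Icc ((a : ℤ) + m) t, 0 ≤ D t') :
    let θ : ℤ → ℝ := fun t' =>
      (∑ τ ∈ Finset.Icc ((a : ℤ) + 1) t',
        (risingFac ((t' - τ + 1 : ℤ) : ℝ) (μ - p - 1) * (C τ)⁻¹) ^ γ) ^ (1 / γ)
    let g : ℤ → ℝ := fun t' =>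
      ∑ τ ∈ Finset.Icc ((a : ℤ) + 1) t',
        C τ ^ δ * |caputoNabla μ ((a : ℤ) + 1) f τ| ^ δ
    let G : ℝ :=
      2 * (g t ^ 2 - g ((a : ℤ) + m - 1) ^ 2) +
        (g (t - 1) ^ 2 - g ((a : ℤ) + m - 2) ^ 2) / 2 +
        2 * (g t * g (t - 1) - g ((a : ℤ) + m - 1) * g ((a : ℤ) + m - 2))
    let K : ℝ := (1 / Real.Gamma (μ - p)) *
      (∑ t' ∈ Finset.Icc ((a : ℤ) + m) t, (D t' * (C t')⁻¹ * θ t') ^ γ) ^ (1 / γ)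
    ∑ t' ∈ Finset.Icc ((a : ℤ) + m) t,
        D t' * |nabla^[p] f t'| * |caputoNabla μ ((a : ℤ) + 1) f t'| ≤
      K * G ^ (1 / δ) := by
  intro θ g G K
  have hpq : γ.HolderConjugate δ :=
    Real.holderConjugate_iff.mpr ⟨hγ, by simpa only [one_div] using hγδ⟩
  have hμm : μ < ⌈μ⌉₊ := (Nat.le_ceil μ).lt_of_ne (by exact_mod_cast hμint ⌈μ⌉₊)
  have hpμ : 0 < μ - p := sub_pos.2 hp
  have hm1 : 1 ≤ m := hm ▸ Nat.one_le_iff_ne_zero.2 (Nat.ceil_pos.2 (by linarith)).ne'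
  have hk (s : ℤ) : ∀ τ ∈ Icc ((a : ℤ) + 1) s, 0 ≤ risingFac ((s - τ + 1 : ℤ) : ℝ) (μ - p - 1) :=
    fun τ hτ => (risingFac_sub_add_one_pos hpμ (mem_Icc.1 hτ).2).le
  have hopial := opial_sum_Icc_le hpq (inv_nonneg.2 (Real.Gamma_pos_of_pos hpμ).le)
    (u := nabla^[p] f) (x := caputoNabla μ ((a : ℤ) + 1) f) (s₀ := (a : ℤ) + m) (by omega)
    (by omega) (fun s _ => hk s) hC hD fun s hs => by
      rw [← fracSum_caputoNabla hp hμm f (by linarith [(mem_Icc.1 hs).1])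
        fun k hpk hkm => hf0 k hpk (by omega), fracSum_eq_inv_Gamma_mul_sum]
  have hy : ∀ τ ∈ Icc ((a : ℤ) + 1) t, 0 ≤ C τ ^ δ * |caputoNabla μ ((a : ℤ) + 1) f τ| ^ δ :=
    fun τ hτ => mul_nonneg (Real.rpow_nonneg (hC τ hτ).le _) (Real.rpow_nonneg (abs_nonneg _) _)
  have hg (r s : ℤ) (hrs : r ≤ s) (hst : s ≤ t) : g r ≤ g s := sum_Icc_le_sum_Icc_of_le hy hrs hst
  have h₀ : 0 ≤ g ((a : ℤ) + m - 2) := sum_Icc_nonneg_of_le hy (by omega)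
  have h₁ := hg ((a : ℤ) + m - 2) ((a : ℤ) + m - 1) (by omega) (by omega)
  have h₂ := hg ((a : ℤ) + m - 1) (t - 1) (by omega) (by omega)
  have h₃ := hg (t - 1) t (by omega) le_rfl
  have hK : 0 ≤ K := mul_nonneg (one_div_nonneg.2 (Real.Gamma_pos_of_pos hpμ).le)
    (opial_constant_nonneg (by omega) (fun s _ => hk s) hC hD)
  calc _ ≤ _ := hopial
    _ = K * (g t ^ 2 - g ((a : ℤ) + m - 1) ^ 2) ^ (1 / δ) := by simp only [K, θ, g, one_div]
    _ ≤ K * G ^ (1 / δ) := by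
        refine mul_le_mul_of_nonneg_left (Real.rpow_le_rpow (by nlinarith) ?_
          (one_div_nonneg.2 hpq.symm.nonneg)) hK
        simp only [G]
        nlinarith

/-- Discrete nabla fractional Opial inequality. -/
theorem discrete_nabla_fractional_opial
    (μ : ℝ) (hμ2 : 2 < μ) (hμint : ∀ n : ℤ, μ ≠ n)
    (m : ℕ) (hm : m = ⌈μ⌉₊) (hm3 : 3 ≤ m)
    (p : ℕ) (hp : (p : ℝ) < μ) (a : ℕ)
    (f : ℤ → ℝ) (t : ℤ) (ht : (a : ℤ) + m ≤ t)
    (hf0 : ∀ k, p ≤ k → k ≤ m - 1 → nabla^[k] f a = 0)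
    (γ δ : ℝ) (hγ : 1 < γ) (hδ : 1 < δ) (hγδ : 1 / γ + 1 / δ = 1)
    (C D : ℤ → ℝ)
    (hC : ∀ τ ∈ Finset.Icc ((a : ℤ) + 1) t, 0 < C τ)
    (hD : ∀ t' ∈ Finset.Icc ((a : ℤ) + m) t, 0 ≤ D t') :
    let θ : ℤ → ℝ := fun t' =>
      (∑ τ ∈ Finset.Icc ((a : ℤ) + 1) t',
        (risingFac ((t' - τ + 1 : ℤ) : ℝ) (μ - p - 1) * (C τ)⁻¹) ^ γ) ^ (1 / γ)
    let g : ℤ → ℝ := fun t' =>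
      ∑ τ ∈ Finset.Icc ((a : ℤ) + 1) t',
        C τ ^ δ * |caputoNabla μ ((a : ℤ) + 1) f τ| ^ δ
    let G : ℝ :=
      2 * (g t ^ 2 - g ((a : ℤ) + m - 1) ^ 2) +
        (g (t - 1) ^ 2 - g ((a : ℤ) + m - 2) ^ 2) / 2 +
        2 * (g t * g (t - 1) - g ((a : ℤ) + m - 1) * g ((a : ℤ) + m - 2))
    let K : ℝ := (1 / Real.Gamma (μ - p)) *
      (∑ t' ∈ Finset.Icc ((a : ℤ) + m) t, (D t' * (C t')⁻¹ * θ t') ^ γ) ^ (1 / γ)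
    ∑ t' ∈ Finset.Icc ((a : ℤ) + m) t,
        D t' * |nabla^[p] f t'| * |caputoNabla μ ((a : ℤ) + 1) f t'| ≤
      K * G ^ (1 / δ) :=
  discrete_nabla_fractional_opial_general μ hμint m hm p hp a f t ht hf0 γ δ hγ hγδ C D hC hD
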